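/- arXiv:2306.08041 — 3 statements merged into one kernel-verified Lean document; each statement's English description precedes it below -/
import Mathlib

section
/- Let (A, R) be a two-player zero-sum normal-form game with A = A₁ × A₂ for finite nonempty action sets A₁, A₂, and let π be a pure strategy profile. Then π is the unique Nash equilibrium of (A, R) among all mixed strategy profiles if and only if π is a strict Nash equilibrium of (A, R). -/
open Finset

/-- A mixed strategy: nonnegative weights summing to one. -/
def IsMixed {α : Type*} [Fintype α] (p : α → ℝ) : Prop :=
  (∀ a, 0 ≤ p a) ∧ ∑ a, p a = 1

/-- The point-mass distribution at `a`. -/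
def pmass {α : Type*} [DecidableEq α] (a : α) : α → ℝ :=
  fun x => if x = a then 1 else 0

/-- Expected reward of a mixed strategy profile `(p, q)` in the game with reward `R`. -/
def expR {A₁ A₂ : Type*} [Fintype A₁] [Fintype A₂]
    (R : A₁ × A₂ → ℝ) (p : A₁ → ℝ) (q : A₂ → ℝ) : ℝ :=
  ∑ a₁, ∑ a₂, p a₁ * q a₂ * R (a₁, a₂)

/-- `(p, q)` is a (mixed) Nash equilibrium of the zero-sum game with reward `R`
(player 1 minimizes `R`, player 2 maximizes `R`). -/
def IsNE {A₁ A₂ : Type*} [Fintype A₁] [Fintype A₂] [DecidableEq A₁] [DecidableEq A₂]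
    (R : A₁ × A₂ → ℝ) (p : A₁ → ℝ) (q : A₂ → ℝ) : Prop :=
  IsMixed p ∧ IsMixed q ∧
  (∀ a₂, expR R p (pmass a₂) ≤ expR R p q) ∧
  (∀ a₁, expR R p q ≤ expR R (pmass a₁) q)

/-- The set of all mixed Nash equilibria of the game with reward `R`. -/
def NESet {A₁ A₂ : Type*} [Fintype A₁] [Fintype A₂] [DecidableEq A₁] [DecidableEq A₂]
    (R : A₁ × A₂ → ℝ) : Set ((A₁ → ℝ) × (A₂ → ℝ)) :=
  {pq | IsNE R pq.1 pq.2}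

/-- The pure strategy profile `π` is a strict Nash equilibrium of the game with reward `R`. -/
def IsStrictNE {A₁ A₂ : Type*} (R : A₁ × A₂ → ℝ) (π : A₁ × A₂) : Prop :=
  (∀ a₂, a₂ ≠ π.2 → R (π.1, a₂) < R π) ∧
  (∀ a₁, a₁ ≠ π.1 → R π < R (a₁, π.2))

set_option linter.unusedSectionVars false

section Basics
variable {A₁ A₂ : Type*} [Fintype A₁] [Fintype A₂] [DecidableEq A₁] [DecidableEq A₂]

lemma isMixed_pmass {α : Type*} [Fintype α] [DecidableEq α] (a : α) : IsMixed (pmass a) := by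
  constructor
  · intro x; unfold pmass; positivity
  · simp [pmass]

lemma expR_pmass_right (R : A₁ × A₂ → ℝ) (p : A₁ → ℝ) (b : A₂) :
    expR R p (pmass b) = ∑ a, p a * R (a, b) := by
  unfold expR pmass
  refine Finset.sum_congr rfl fun a _ => ?_
  rw [Finset.sum_eq_single b] <;> simp +contextual

lemma expR_pmass_left (R : A₁ × A₂ → ℝ) (a : A₁) (q : A₂ → ℝ) :
    expR R (pmass a) q = ∑ b, q b * R (a, b) := by
  unfold expR pmass
  rw [Finset.sum_eq_single a] <;> simp +contextual

lemma expR_pmass_pmass (R : A₁ × A₂ → ℝ) (a : A₁) (b : A₂) :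
    expR R (pmass a) (pmass b) = R (a, b) := by
  rw [expR_pmass_left, Finset.sum_eq_single b] <;> simp +contextual [pmass]

lemma expR_eq_sum_right (R : A₁ × A₂ → ℝ) (p : A₁ → ℝ) (q : A₂ → ℝ) :
    expR R p q = ∑ b, q b * expR R p (pmass b) := by
  simp_rw [expR_pmass_right]
  unfold expR
  rw [Finset.sum_comm]
  refine Finset.sum_congr rfl fun b _ => ?_
  rw [Finset.mul_sum]
  exact Finset.sum_congr rfl fun a _ => by ring

lemma expR_eq_sum_left (R : A₁ × A₂ → ℝ) (p : A₁ → ℝ) (q : A₂ → ℝ) :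
    expR R p q = ∑ a, p a * expR R (pmass a) q := by
  simp_rw [expR_pmass_left]
  unfold expR
  refine Finset.sum_congr rfl fun a _ => ?_
  rw [Finset.mul_sum]
  exact Finset.sum_congr rfl fun b _ => by ring

/-- The transposed (player-swapped) game. -/
lemma isNE_swap (R : A₁ × A₂ → ℝ) (p : A₁ → ℝ) (q : A₂ → ℝ) :
    IsNE (fun ba : A₂ × A₁ => -R (ba.2, ba.1)) q p ↔ IsNE R p q := by
  have hneg : ∀ (p' : A₁ → ℝ) (q' : A₂ → ℝ),
      expR (fun ba : A₂ × A₁ => -R (ba.2, ba.1)) q' p' = - expR R p' q' := by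
    intro p' q'
    unfold expR
    rw [← Finset.sum_neg_distrib, Finset.sum_comm]
    refine Finset.sum_congr rfl fun a _ => ?_
    rw [← Finset.sum_neg_distrib]
    exact Finset.sum_congr rfl fun b _ => by ring
  constructor
  · rintro ⟨hq, hp, h1, h2⟩
    refine ⟨hp, hq, fun b => ?_, fun a => ?_⟩
    · have := h2 b; rw [hneg, hneg] at this; linarith
    · have := h1 a; rw [hneg, hneg] at this; linarith
  · rintro ⟨hp, hq, h1, h2⟩
    refine ⟨hq, hp, fun a => ?_, fun b => ?_⟩
    · have := h2 a; rw [hneg, hneg]; linarith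
    · have := h1 b; rw [hneg, hneg]; linarith

end Basics

/-- Choice of a small enough `ε`. -/
lemma eps_choice {α : Type*} [Fintype α] [Nonempty α] (d c : α → ℝ) (F : Finset α)
    (hd : ∀ a ∈ F, 0 < d a) :
    ∃ ε : ℝ, 0 < ε ∧ ε ≤ 1/2 ∧ ∀ a ∈ F, 0 ≤ (1 - ε) * d a + ε * c a := by
  classical
  set e : α → ℝ := fun a => if a ∈ F then d a / (d a + |c a| + 1) else 1 with he
  have hepos : ∀ a, 0 < e a := by
    intro a
    rw [he]
    by_cases h : a ∈ F
    · simp only [h, if_true]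
      have := hd a h
      have := abs_nonneg (c a)
      positivity
    · simp [h]
  set ε : ℝ := min (1/2) (univ.inf' univ_nonempty e) with hε
  refine ⟨ε, ?_, min_le_left _ _, ?_⟩
  · rw [hε, lt_min_iff]
    refine ⟨by norm_num, ?_⟩
    rw [Finset.lt_inf'_iff]
    exact fun a _ => hepos a
  · intro a ha
    have h1 : ε ≤ e a := le_trans (min_le_right _ _) (Finset.inf'_le _ (mem_univ a))
    have h2 : e a = d a / (d a + |c a| + 1) := by rw [he]; simp [ha]
    have hda := hd a ha
    have habs := abs_nonneg (c a)
    have hpos : 0 < d a + |c a| + 1 := by positivity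
    have h3 : ε * (d a + |c a| + 1) ≤ d a := by
      rw [← le_div_iff₀ hpos]; rw [h2] at h1; exact h1
    have h4 : -|c a| ≤ c a := neg_abs_le (c a)
    have hε0 : 0 < ε := by
      rw [hε, lt_min_iff]
      refine ⟨by norm_num, ?_⟩
      rw [Finset.lt_inf'_iff]
      exact fun a _ => hepos a
    nlinarith


lemma ville {ι κ : Type*} [Fintype ι] [Fintype κ] [DecidableEq ι] [DecidableEq κ]
    (T : Finset ι) (S : Finset κ) (hS : S.Nonempty) (M : ι → κ → ℝ) :
    (∃ x : κ → ℝ, (∀ b, 0 ≤ x b) ∧ (∀ b ∉ S, x b = 0) ∧ (∑ b, x b = 1) ∧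
       ∀ a ∈ T, 0 ≤ ∑ b, x b * M a b) ∨
    (∃ y : ι → ℝ, (∀ a, 0 ≤ y a) ∧ (∀ a ∉ T, y a = 0) ∧ (∑ a, y a = 1) ∧
       ∀ b ∈ S, ∑ a, y a * M a b ≤ 0) := by
  classical
  by_cases h1 : ∃ x : κ → ℝ, (∀ b, 0 ≤ x b) ∧ (∀ b ∉ S, x b = 0) ∧ (∑ b, x b = 1) ∧
      ∀ a ∈ T, 0 ≤ ∑ b, x b * M a b
  · exact Or.inl h1
  right
  -- the simplex supported on S
  set D : Set (κ → ℝ) :=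
    {x | (∀ b, 0 ≤ x b) ∧ (∀ b ∉ S, x b = 0) ∧ (∑ b, x b = 1)} with hD
  -- the linear map x ↦ (a ↦ ∑ b, M a b * x b)
  set L : (κ → ℝ) →ₗ[ℝ] (ι → ℝ) :=
    LinearMap.pi (fun a => ∑ b ∈ univ, M a b • LinearMap.proj b) with hL
  have hLapp : ∀ x a, L x a = ∑ b, M a b * x b := by
    intro x a
    simp [hL, LinearMap.pi_apply, LinearMap.sum_apply]
  set K : Set (ι → ℝ) := L '' D with hK
  set O : Set (ι → ℝ) := {z | ∀ a ∈ T, 0 ≤ z a} with hO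
  have hdisj : Disjoint K O := by
    rw [Set.disjoint_left]
    rintro k ⟨x, hxD, rfl⟩ hkO
    exact h1 ⟨x, hxD.1, hxD.2.1, hxD.2.2, fun a ha => by
      have := hkO _ ha
      rw [hLapp] at this
      simpa [mul_comm] using this⟩
  have hDconv : Convex ℝ D := by
    intro x hx y hy s t hs ht hst
    refine ⟨fun b => by have := hx.1 b; have := hy.1 b; simp; positivity,
      fun b hb => by simp [hx.2.1 b hb, hy.2.1 b hb], ?_⟩
    simp only [Pi.add_apply, Pi.smul_apply, smul_eq_mul]
    rw [Finset.sum_add_distrib, ← Finset.mul_sum, ← Finset.mul_sum, hx.2.2, hy.2.2]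
    simpa using hst
  have hDclosed : IsClosed D := by
    have : D = (⋂ b, {x : κ → ℝ | 0 ≤ x b}) ∩ ((⋂ b ∈ (Sᶜ : Finset κ), {x : κ → ℝ | x b = 0})
        ∩ {x : κ → ℝ | ∑ b, x b = 1}) := by
      ext x
      simp [hD, Set.mem_iInter, forall_and, and_assoc]
    rw [this]
    refine IsClosed.inter (isClosed_iInter fun b => isClosed_le continuous_const (continuous_apply b))
      (IsClosed.inter (isClosed_biInter fun b _ => isClosed_eq (continuous_apply b) continuous_const)
        (isClosed_eq (by continuity) continuous_const))
  have hDcomp : IsCompact D := by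
    refine IsCompact.of_isClosed_subset (isCompact_univ_pi fun _ => isCompact_Icc (a := (0:ℝ)) (b := 1)) hDclosed ?_
    intro x hx
    refine Set.mem_univ_pi.mpr fun b => ⟨hx.1 b, ?_⟩
    calc x b ≤ ∑ b', x b' := Finset.single_le_sum (fun b' _ => hx.1 b') (mem_univ b)
    _ = 1 := hx.2.2
  have hKcomp : IsCompact K := hDcomp.image L.continuous_of_finiteDimensional
  have hKconv : Convex ℝ K := hDconv.linear_image L
  have hOconv : Convex ℝ O := by
    intro x hx y hy s t hs ht _
    intro a ha
    have := hx a ha; have := hy a ha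
    simp only [Pi.add_apply, Pi.smul_apply, smul_eq_mul]
    positivity
  have hOclosed : IsClosed O := by
    have : O = ⋂ a ∈ T, {z : ι → ℝ | 0 ≤ z a} := by ext z; simp [hO]
    rw [this]
    exact isClosed_biInter fun a _ => isClosed_le continuous_const (continuous_apply a)
  obtain ⟨f, u, w, hfK, huw, hfO⟩ :=
    geometric_hahn_banach_compact_closed hKconv hKcomp hOconv hOclosed hdisj
  have hw0 : w < 0 := by
    have h0 : (0 : ι → ℝ) ∈ O := fun a _ => le_refl 0
    have := hfO 0 h0
    simpa using this
  set y₀ : ι → ℝ := fun a => f (Pi.single a 1 : ι → ℝ) with hy₀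
  have hsingle : ∀ (a : ι) (t : ℝ), f (t • (Pi.single a 1 : ι → ℝ)) = t * y₀ a := by
    intro a t; rw [map_smul]; simp [hy₀]
  have hyT : ∀ a ∈ T, 0 ≤ y₀ a := by
    intro a ha
    by_contra h
    push_neg at h
    have ht : 0 < w / y₀ a := div_pos_of_neg_of_neg hw0 h
    have hmem : (w / y₀ a) • (Pi.single a 1 : ι → ℝ) ∈ O := by
      intro a' _
      simp only [Pi.smul_apply, smul_eq_mul]
      rcases eq_or_ne a' a with rfl | hne
      · simp [ht.le]
      · simp [Pi.single_eq_of_ne hne]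
    have := hfO _ hmem
    rw [hsingle, div_mul_cancel₀ _ (ne_of_lt h)] at this
    exact lt_irrefl _ this
  have hyT' : ∀ a ∉ T, y₀ a = 0 := by
    intro a ha
    by_contra h
    have hmem : ((w - 1) / y₀ a) • (Pi.single a 1 : ι → ℝ) ∈ O := by
      intro a' ha'
      have hne : a' ≠ a := fun he => ha (he ▸ ha')
      simp [Pi.single_eq_of_ne hne]
    have := hfO _ hmem
    rw [hsingle, div_mul_cancel₀ _ h] at this
    linarith
  have hynn : ∀ a, 0 ≤ y₀ a := by
    intro a
    by_cases h : a ∈ T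
    · exact hyT a h
    · exact le_of_eq (hyT' a h).symm
  have hrepr : ∀ z : ι → ℝ, f z = ∑ a, z a * y₀ a := by
    intro z
    have hz : z = ∑ a, z a • (Pi.single a 1 : ι → ℝ) := by
      funext a'
      simp only [Finset.sum_apply, Pi.smul_apply, smul_eq_mul]
      rw [Finset.sum_eq_single a'] <;> simp +contextual [Pi.single_apply]
    conv_lhs => rw [hz]
    rw [map_sum]
    exact Finset.sum_congr rfl fun a _ => hsingle a (z a)
  -- for each b ∈ S the column of M is in K
  have hcol : ∀ b ∈ S, ∑ a, M a b * y₀ a < u := by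
    intro b hb
    have hxD : (fun b' => if b' = b then (1:ℝ) else 0) ∈ D := by
      refine ⟨fun b' => by positivity, fun b' hb' => ?_, by simp⟩
      have : b' ≠ b := fun he => hb' (he ▸ hb)
      simp [this]
    have hKmem : L (fun b' => if b' = b then (1:ℝ) else 0) ∈ K := Set.mem_image_of_mem _ hxD
    have := hfK _ hKmem
    rw [hrepr] at this
    convert this using 2 with a
    rw [hLapp]
    rw [Finset.sum_eq_single b] <;> simp +contextual
  obtain ⟨b₀, hb₀⟩ := hS
  have hu0 : u < 0 := lt_trans huw hw0
  have hs : 0 < ∑ a, y₀ a := by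
    rcases (Finset.sum_nonneg fun a _ => hynn a).lt_or_eq with h | h
    · exact h
    · exfalso
      have hz : ∀ a ∈ univ, y₀ a = 0 :=
        (Finset.sum_eq_zero_iff_of_nonneg fun a _ => hynn a).1 h.symm
      have := hcol b₀ hb₀
      rw [Finset.sum_congr rfl (fun a ha => by rw [hz a ha, mul_zero])] at this
      simp at this
      linarith
  refine ⟨fun a => y₀ a / (∑ a', y₀ a'), fun a => div_nonneg (hynn a) hs.le,
    fun a ha => by simp [hyT' a ha], by rw [← Finset.sum_div, div_self hs.ne'], ?_⟩
  intro b hb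
  rw [show ∑ a, y₀ a / (∑ a', y₀ a') * M a b = (∑ a, M a b * y₀ a) / (∑ a', y₀ a') by
    rw [Finset.sum_div]; exact Finset.sum_congr rfl fun a _ => by ring]
  exact div_nonpos_of_nonpos_of_nonneg (le_of_lt (lt_trans (hcol b hb) hu0)) hs.le

section Back
variable {A₁ A₂ : Type*} [Fintype A₁] [Fintype A₂] [DecidableEq A₁] [DecidableEq A₂]

lemma strict_imp_unique (R : A₁ × A₂ → ℝ) (π : A₁ × A₂) (h : IsStrictNE R π) :
    NESet R = {(pmass π.1, pmass π.2)} := by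
  obtain ⟨h2, h1⟩ := h
  have hRπ : R (π.1, π.2) = R π := by rw [Prod.mk.eta]
  have hle : ∀ b, R (π.1, b) ≤ R π := by
    intro b
    rcases eq_or_ne b π.2 with rfl | hb
    · exact le_of_eq hRπ
    · exact (h2 b hb).le
  have hge : ∀ a, R π ≤ R (a, π.2) := by
    intro a
    rcases eq_or_ne a π.1 with rfl | ha
    · exact ge_of_eq hRπ
    · exact (h1 a ha).le
  ext ⟨p, q⟩
  simp only [NESet, Set.mem_setOf_eq, Set.mem_singleton_iff, Prod.mk.injEq]
  constructor
  · rintro ⟨hp, hq, hbr2, hbr1⟩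
    have e2 : expR R (pmass π.1) q ≤ R π := by
      rw [expR_eq_sum_right]
      have hstep : (∑ b, q b * expR R (pmass π.1) (pmass b)) ≤ ∑ b, q b * R π := by
        refine Finset.sum_le_sum fun b _ => mul_le_mul_of_nonneg_left ?_ (hq.1 b)
        rw [expR_pmass_pmass]; exact hle b
      rw [← Finset.sum_mul, hq.2, one_mul] at hstep
      exact hstep
    have e3 : R π ≤ expR R p (pmass π.2) := by
      rw [expR_pmass_right]
      have hstep : (∑ a, p a * R π) ≤ ∑ a, p a * R (a, π.2) :=
        Finset.sum_le_sum fun a _ => mul_le_mul_of_nonneg_left (hge a) (hp.1 a)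
      rw [← Finset.sum_mul, hp.2, one_mul] at hstep
      exact hstep
    have e4 := hbr2 π.2
    have e1 := hbr1 π.1
    have hveq : expR R p (pmass π.2) = R π := le_antisymm (by linarith) e3
    have hveq' : expR R (pmass π.1) q = R π := le_antisymm e2 (by linarith)
    constructor
    · -- p = pmass π.1
      have hzero : ∑ a, p a * (R (a, π.2) - R π) = 0 := by
        have hcalc : ∑ a, p a * (R (a, π.2) - R π)
            = expR R p (pmass π.2) - R π := by
          rw [expR_pmass_right]
          rw [show ∑ a, p a * (R (a, π.2) - R π)
              = ∑ a, (p a * R (a, π.2) - p a * R π) from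
            Finset.sum_congr rfl fun a _ => by ring]
          rw [Finset.sum_sub_distrib, ← Finset.sum_mul, hp.2, one_mul]
        rw [hcalc, hveq, sub_self]
      have hterm : ∀ a ∈ univ, p a * (R (a, π.2) - R π) = 0 :=
        (Finset.sum_eq_zero_iff_of_nonneg fun a _ =>
          mul_nonneg (hp.1 a) (sub_nonneg.2 (hge a))).1 hzero
      have hpz : ∀ a, a ≠ π.1 → p a = 0 := by
        intro a ha
        rcases mul_eq_zero.1 (hterm a (mem_univ a)) with h | h
        · exact h
        · exact absurd h (sub_ne_zero.2 (ne_of_gt (h1 a ha)))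
      have hp1 : p π.1 = 1 := by
        have := hp.2
        rwa [Finset.sum_eq_single π.1 (fun a _ ha => hpz a ha)
          (fun h => absurd (mem_univ π.1) h)] at this
      funext x
      unfold pmass
      rcases eq_or_ne x π.1 with rfl | hx
      · simp [hp1]
      · simp [hx, hpz x hx]
    · -- q = pmass π.2
      have hzero : ∑ b, q b * (R π - R (π.1, b)) = 0 := by
        have hcalc : ∑ b, q b * (R π - R (π.1, b))
            = R π - expR R (pmass π.1) q := by
          rw [expR_pmass_left]
          rw [show ∑ b, q b * (R π - R (π.1, b))
              = ∑ b, (q b * R π - q b * R (π.1, b)) from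
            Finset.sum_congr rfl fun b _ => by ring]
          rw [Finset.sum_sub_distrib, ← Finset.sum_mul, hq.2, one_mul]
        rw [hcalc, hveq', sub_self]
      have hterm : ∀ b ∈ univ, q b * (R π - R (π.1, b)) = 0 :=
        (Finset.sum_eq_zero_iff_of_nonneg fun b _ =>
          mul_nonneg (hq.1 b) (sub_nonneg.2 (hle b))).1 hzero
      have hqz : ∀ b, b ≠ π.2 → q b = 0 := by
        intro b hb
        rcases mul_eq_zero.1 (hterm b (mem_univ b)) with h | h
        · exact h
        · exact absurd h (sub_ne_zero.2 (ne_of_gt (h2 b hb)))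
      have hq1 : q π.2 = 1 := by
        have := hq.2
        rwa [Finset.sum_eq_single π.2 (fun b _ hb => hqz b hb)
          (fun h => absurd (mem_univ π.2) h)] at this
      funext x
      unfold pmass
      rcases eq_or_ne x π.2 with rfl | hx
      · simp [hq1]
      · simp [hx, hqz x hx]
  · rintro ⟨rfl, rfl⟩
    refine ⟨isMixed_pmass _, isMixed_pmass _, fun b => ?_, fun a => ?_⟩
    · rw [expR_pmass_pmass, expR_pmass_pmass, hRπ]; exact hle b
    · rw [expR_pmass_pmass, expR_pmass_pmass, hRπ]; exact hge a

end Back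

section Key
variable {A₁ A₂ : Type*} [Fintype A₁] [Fintype A₂] [DecidableEq A₁] [DecidableEq A₂]
  [Nonempty A₁] [Nonempty A₂]

lemma unique_imp_col_strict (R : A₁ × A₂ → ℝ) (π : A₁ × A₂)
    (hset : NESet R = {(pmass π.1, pmass π.2)}) :
    ∀ b, b ≠ π.2 → R (π.1, b) < R π := by
  classical
  have hRπ : R (π.1, π.2) = R π := by rw [Prod.mk.eta]
  have hmem : IsNE R (pmass π.1) (pmass π.2) := by
    have : ((pmass π.1, pmass π.2) : (A₁ → ℝ) × (A₂ → ℝ)) ∈ NESet R := by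
      rw [hset]; exact Set.mem_singleton _
    exact this
  obtain ⟨_, _, hbr2, hbr1⟩ := hmem
  have hvv : expR R (pmass π.1) (pmass π.2) = R π := by
    rw [expR_pmass_pmass, Prod.mk.eta]
  have hle : ∀ b, R (π.1, b) ≤ R π := by
    intro b; have := hbr2 b; rwa [expR_pmass_pmass, hvv] at this
  have hge : ∀ a, R π ≤ R (a, π.2) := by
    intro a; have := hbr1 a; rwa [hvv, expR_pmass_pmass] at this
  intro b₀ hb₀
  by_contra hcon
  have hb₀eq : R (π.1, b₀) = R π := le_antisymm (hle b₀) (not_lt.1 hcon)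
  set T : Finset A₁ := univ.filter (fun a => a ≠ π.1 ∧ R (a, π.2) = R π) with hT
  set S : Finset A₂ := univ.filter (fun b => b ≠ π.2 ∧ R (π.1, b) = R π) with hS
  have hSne : S.Nonempty := ⟨b₀, by simp [hS, hb₀, hb₀eq]⟩
  rcases ville T S hSne (fun a b => R (a, b) - R π) with
    ⟨x, hx0, hxS, hxsum, hxT⟩ | ⟨y, hy0, hyT, hysum, hyS⟩
  · -- Case 1: perturb player 2's strategy
    obtain ⟨ε, hε0, hε12, hεcond⟩ := eps_choice (fun a => R (a, π.2) - R π)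
      (fun a => ∑ b, x b * (R (a, b) - R π))
      (univ.filter (fun a => a ≠ π.1 ∧ R (a, π.2) ≠ R π))
      (fun a ha => by
        simp only [mem_filter] at ha
        exact sub_pos.2 (lt_of_le_of_ne (hge a) (Ne.symm ha.2.2)))
    set qε : A₂ → ℝ := fun b => (1 - ε) * pmass π.2 b + ε * x b with hqε
    have hxv : ∀ b, x b * (R (π.1, b) - R π) = 0 := by
      intro b
      by_cases hb : b ∈ S
      · rw [hS] at hb; simp only [mem_filter] at hb
        rw [hb.2.2, sub_self, mul_zero]
      · rw [hxS b hb, zero_mul]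
    have hmix : IsMixed qε := by
      constructor
      · intro b
        have h1 := hx0 b
        have h2 : (0:ℝ) ≤ pmass π.2 b := (isMixed_pmass π.2).1 b
        have h3 : ε ≤ 1 := by linarith
        simp only [hqε]
        nlinarith
      · simp only [hqε]
        rw [Finset.sum_add_distrib, ← Finset.mul_sum, ← Finset.mul_sum,
          (isMixed_pmass π.2).2, hxsum]
        ring
    have hsum : ∀ a, ∑ b, qε b * R (a, b)
        = (1 - ε) * R (a, π.2) + ε * (R π + ∑ b, x b * (R (a, b) - R π)) := by
      intro a
      have h1 : ∑ b, pmass π.2 b * R (a, b) = R (a, π.2) := by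
        rw [Finset.sum_eq_single π.2] <;> simp +contextual [pmass]
      have h2 : ∑ b, x b * R (a, b) = R π + ∑ b, x b * (R (a, b) - R π) := by
        have h3 : ∑ b, x b * (R (a, b) - R π) = ∑ b, x b * R (a, b) - ∑ b, x b * R π := by
          rw [← Finset.sum_sub_distrib]
          exact Finset.sum_congr rfl fun b _ => by ring
        rw [h3, ← Finset.sum_mul, hxsum, one_mul]; ring
      have h4 : ∑ b, qε b * R (a, b)
          = (1 - ε) * (∑ b, pmass π.2 b * R (a, b)) + ε * (∑ b, x b * R (a, b)) := by
        rw [Finset.mul_sum, Finset.mul_sum, ← Finset.sum_add_distrib]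
        exact Finset.sum_congr rfl fun b _ => by simp only [hqε]; ring
      rw [h4, h1, h2]
    have h0 : ∑ b, x b * (R (π.1, b) - R π) = 0 := Finset.sum_eq_zero fun b _ => hxv b
    have hqv : ∑ b, qε b * R (π.1, b) = R π := by
      rw [hsum π.1, hRπ, h0]; ring
    have hA : ∀ a, R π ≤ ∑ b, qε b * R (a, b) := by
      intro a
      rw [hsum a]
      rcases eq_or_ne a π.1 with rfl | ha
      · rw [hRπ, h0]; simp; linarith
      by_cases haT : a ∈ T
      · have hc := hxT a haT
        rw [hT] at haT; simp only [mem_filter] at haT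
        rw [haT.2.2]
        nlinarith
      · have haF : a ∈ univ.filter (fun a => a ≠ π.1 ∧ R (a, π.2) ≠ R π) := by
          rw [hT] at haT
          simp only [mem_filter, mem_univ, true_and] at haT ⊢
          exact ⟨ha, fun h => haT ⟨ha, h⟩⟩
        have := hεcond a haF
        linarith
    have hNE : ((pmass π.1, qε) : (A₁ → ℝ) × (A₂ → ℝ)) ∈ NESet R := by
      refine ⟨isMixed_pmass _, hmix, fun b => ?_, fun a => ?_⟩
      · rw [expR_pmass_pmass, expR_pmass_left, hqv]; exact hle b
      · rw [expR_pmass_left, expR_pmass_left, hqv]; exact hA a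
    rw [hset, Set.mem_singleton_iff, Prod.mk.injEq] at hNE
    obtain ⟨b₁, hb₁⟩ : ∃ b, x b ≠ 0 := by
      by_contra hall; push_neg at hall
      rw [Finset.sum_congr rfl fun b _ => hall b] at hxsum
      simp at hxsum
    have hb₁S : b₁ ∈ S := by by_contra h; exact hb₁ (hxS b₁ h)
    rw [hS] at hb₁S; simp only [mem_filter] at hb₁S
    have := congrFun hNE.2 b₁
    simp only [hqε, pmass] at this
    rw [if_neg hb₁S.2.1] at this
    rcases mul_eq_zero.1 (by linarith : ε * x b₁ = 0) with h | h
    · exact absurd h (ne_of_gt hε0)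
    · exact hb₁ h
  · -- Case 2: perturb player 1's strategy
    obtain ⟨ε, hε0, hε12, hεcond⟩ := eps_choice (fun b => R π - R (π.1, b))
      (fun b => - ∑ a, y a * (R (a, b) - R π))
      (univ.filter (fun b => b ≠ π.2 ∧ R (π.1, b) ≠ R π))
      (fun b hb => by
        simp only [mem_filter] at hb
        exact sub_pos.2 (lt_of_le_of_ne (hle b) hb.2.2))
    set pε : A₁ → ℝ := fun a => (1 - ε) * pmass π.1 a + ε * y a with hpε
    have hyv : ∀ a, y a * (R (a, π.2) - R π) = 0 := by
      intro a
      by_cases ha : a ∈ T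
      · rw [hT] at ha; simp only [mem_filter] at ha
        rw [ha.2.2, sub_self, mul_zero]
      · rw [hyT a ha, zero_mul]
    have hmix : IsMixed pε := by
      constructor
      · intro a
        have h1 := hy0 a
        have h2 : (0:ℝ) ≤ pmass π.1 a := (isMixed_pmass π.1).1 a
        have h3 : ε ≤ 1 := by linarith
        simp only [hpε]
        nlinarith
      · simp only [hpε]
        rw [Finset.sum_add_distrib, ← Finset.mul_sum, ← Finset.mul_sum,
          (isMixed_pmass π.1).2, hysum]
        ring
    have hsum : ∀ b, ∑ a, pε a * R (a, b)
        = (1 - ε) * R (π.1, b) + ε * (R π + ∑ a, y a * (R (a, b) - R π)) := by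
      intro b
      have h1 : ∑ a, pmass π.1 a * R (a, b) = R (π.1, b) := by
        rw [Finset.sum_eq_single π.1] <;> simp +contextual [pmass]
      have h2 : ∑ a, y a * R (a, b) = R π + ∑ a, y a * (R (a, b) - R π) := by
        have h3 : ∑ a, y a * (R (a, b) - R π) = ∑ a, y a * R (a, b) - ∑ a, y a * R π := by
          rw [← Finset.sum_sub_distrib]
          exact Finset.sum_congr rfl fun a _ => by ring
        rw [h3, ← Finset.sum_mul, hysum, one_mul]; ring
      have h4 : ∑ a, pε a * R (a, b)
          = (1 - ε) * (∑ a, pmass π.1 a * R (a, b)) + ε * (∑ a, y a * R (a, b)) := by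
        rw [Finset.mul_sum, Finset.mul_sum, ← Finset.sum_add_distrib]
        exact Finset.sum_congr rfl fun a _ => by simp only [hpε]; ring
      rw [h4, h1, h2]
    have h0 : ∑ a, y a * (R (a, π.2) - R π) = 0 := Finset.sum_eq_zero fun a _ => hyv a
    have hpv : ∑ a, pε a * R (a, π.2) = R π := by
      rw [hsum π.2, hRπ, h0]; ring
    have hB : ∀ b, ∑ a, pε a * R (a, b) ≤ R π := by
      intro b
      rw [hsum b]
      rcases eq_or_ne b π.2 with rfl | hb
      · rw [hRπ, h0]; simp; linarith
      by_cases hbS : b ∈ S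
      · have hc := hyS b hbS
        rw [hS] at hbS; simp only [mem_filter] at hbS
        rw [hbS.2.2]
        nlinarith
      · have hbF : b ∈ univ.filter (fun b => b ≠ π.2 ∧ R (π.1, b) ≠ R π) := by
          rw [hS] at hbS
          simp only [mem_filter, mem_univ, true_and] at hbS ⊢
          exact ⟨hb, fun h => hbS ⟨hb, h⟩⟩
        have := hεcond b hbF
        linarith
    have hNE : ((pε, pmass π.2) : (A₁ → ℝ) × (A₂ → ℝ)) ∈ NESet R := by
      refine ⟨hmix, isMixed_pmass _, fun b => ?_, fun a => ?_⟩
      · rw [expR_pmass_right, expR_pmass_right, hpv]; exact hB b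
      · rw [expR_pmass_right, expR_pmass_pmass, hpv]; exact hge a
    rw [hset, Set.mem_singleton_iff, Prod.mk.injEq] at hNE
    obtain ⟨a₁, ha₁⟩ : ∃ a, y a ≠ 0 := by
      by_contra hall; push_neg at hall
      rw [Finset.sum_congr rfl fun a _ => hall a] at hysum
      simp at hysum
    have ha₁T : a₁ ∈ T := by by_contra h; exact ha₁ (hyT a₁ h)
    rw [hT] at ha₁T; simp only [mem_filter] at ha₁T
    have := congrFun hNE.1 a₁
    simp only [hpε, pmass] at this
    rw [if_neg ha₁T.2.1] at this
    rcases mul_eq_zero.1 (by linarith : ε * y a₁ = 0) with h | h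
    · exact absurd h (ne_of_gt hε0)
    · exact ha₁ h

end Key

/-- A pure strategy profile is the unique mixed Nash equilibrium of a finite
two-player zero-sum game iff it is a strict Nash equilibrium. -/
theorem unique_nash_iff_strict {A₁ A₂ : Type*} [Fintype A₁] [Fintype A₂]
    [DecidableEq A₁] [DecidableEq A₂] [Nonempty A₁] [Nonempty A₂]
    (R : A₁ × A₂ → ℝ) (π : A₁ × A₂) :
    NESet R = {(pmass π.1, pmass π.2)} ↔ IsStrictNE R π := by

  constructor
  · intro hset
    refine ⟨unique_imp_col_strict R π hset, ?_⟩
    have hset' : NESet (fun ba : A₂ × A₁ => -R (ba.2, ba.1)) = {(pmass π.2, pmass π.1)} := by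
      ext ⟨q, p⟩
      simp only [NESet, Set.mem_setOf_eq, Set.mem_singleton_iff, Prod.mk.injEq]
      rw [isNE_swap R p q]
      constructor
      · intro h
        have hm : ((p, q) : (A₁ → ℝ) × (A₂ → ℝ)) ∈ NESet R := h
        rw [hset, Set.mem_singleton_iff, Prod.mk.injEq] at hm
        exact ⟨hm.2, hm.1⟩
      · rintro ⟨rfl, rfl⟩
        have hm : ((pmass π.1, pmass π.2) : (A₁ → ℝ) × (A₂ → ℝ)) ∈ NESet R := by
          rw [hset]; exact Set.mem_singleton _
        exact hm
    have hkey := unique_imp_col_strict (fun ba : A₂ × A₁ => -R (ba.2, ba.1)) (π.2, π.1) hset'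
    intro a ha
    have h2 := hkey a ha
    simp only at h2
    have hRπ : R (π.1, π.2) = R π := by rw [Prod.mk.eta]
    linarith
  · exact strict_imp_unique R π
end

section
/- Let A = A₁ × A₂ for finite nonempty action sets A₁, A₂, let π be a pure strategy profile, let ι > 0, let R̂ : A → ℝ be a point estimate and ρ : A → ℝ≥0 a radius function. Then the following are equivalent: (i) every R : A → ℝ with |R(a) − R̂(a)| ≤ ρ(a) for all a ∈ A belongs to the ι-strict unique Nash set U̲(π; ι); (ii) for all a₁ ≠ π₁ and a₂ ≠ π₂, R̂((π₁, a₂)) + ρ((π₁, a₂)) + ι ≤ R̂(π) − ρ(π) and R̂(π) + ρ(π) ≤ R̂((a₁, π₂)) − ρ((a₁, π₂)) − ι. -/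
open Finset

/-- A hypercube of reward functions with center `R̂` and radii `ρ ≥ 0` is contained in
the `ι`-strict unique Nash set `U̲(π; ι)` iff the corner inequalities on `R̂` hold. -/
theorem hypercube_subset_iotaUN_iff {A₁ A₂ : Type*} [Fintype A₁] [Fintype A₂]
    [DecidableEq A₁] [DecidableEq A₂] [Nonempty A₁] [Nonempty A₂]
    (π : A₁ × A₂) (ι : ℝ) (hι : 0 < ι)
    (Rhat : A₁ × A₂ → ℝ) (ρ : A₁ × A₂ → ℝ) (hρ : ∀ a, 0 ≤ ρ a) :
    (∀ R : A₁ × A₂ → ℝ, (∀ a, |R a - Rhat a| ≤ ρ a) →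
      (∀ a₂, a₂ ≠ π.2 → R (π.1, a₂) + ι ≤ R π) ∧
      (∀ a₁, a₁ ≠ π.1 → R π ≤ R (a₁, π.2) - ι)) ↔
    ((∀ a₂, a₂ ≠ π.2 →
        Rhat (π.1, a₂) + ρ (π.1, a₂) + ι ≤ Rhat π - ρ π) ∧
     (∀ a₁, a₁ ≠ π.1 →
        Rhat π + ρ π ≤ Rhat (a₁, π.2) - ρ (a₁, π.2) - ι)) := by
  constructor
  · intro h
    constructor
    · intro a₂ ha₂
      set R : A₁ × A₂ → ℝ := fun a => if a = π then Rhat a - ρ a else Rhat a + ρ a with hR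
      have hball : ∀ a, |R a - Rhat a| ≤ ρ a := by
        intro a
        by_cases hc : a = π <;> simp [hR, hc, abs_le] <;>
          first
          | (constructor <;> linarith [hρ π, hρ a])
          | linarith [hρ π, hρ a]
      have h1 := (h R hball).1 a₂ ha₂
      have hne : (π.1, a₂) ≠ π := by
        intro hc; apply ha₂; rw [← hc]
      simp [hR, hne] at h1
      linarith
    · intro a₁ ha₁
      set R : A₁ × A₂ → ℝ := fun a => if a = π then Rhat a + ρ a else Rhat a - ρ a with hR
      have hball : ∀ a, |R a - Rhat a| ≤ ρ a := by
        intro a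
        by_cases hc : a = π <;> simp [hR, hc, abs_le] <;>
          first
          | (constructor <;> linarith [hρ π, hρ a])
          | linarith [hρ π, hρ a]
      have h1 := (h R hball).2 a₁ ha₁
      have hne : (a₁, π.2) ≠ π := by
        intro hc; apply ha₁; rw [← hc]
      simp [hR, hne] at h1
      linarith
  · intro h R hball
    constructor
    · intro a₂ ha₂
      have h1 := h.1 a₂ ha₂
      have h2 := abs_le.mp (hball (π.1, a₂))
      have h3 := abs_le.mp (hball π)
      linarith [h2.1, h2.2, h3.1, h3.2]
    · intro a₁ ha₁
      have h1 := h.2 a₁ ha₁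
      have h2 := abs_le.mp (hball (a₁, π.2))
      have h3 := abs_le.mp (hball π)
      linarith [h2.1, h2.2, h3.1, h3.2]
end

section
/- Let A = A₁ × A₂ for finite nonempty action sets A₁, A₂, let π be a pure strategy profile, let ι > 0 and δ ≥ 0. If R̂ : A → ℝ belongs to the (ι + 2δ)-strict unique Nash set U̲(π; ι + 2δ), then every R : A → ℝ with max_{a∈A} |R(a) − R̂(a)| ≤ δ belongs to the ι-strict unique Nash set U̲(π; ι). -/
open Finset

/-- If `R̂` lies in the `(ι + 2δ)`-strict unique Nash set of the pure strategy profile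
`π`, then every reward function within sup-distance `δ` of `R̂` lies in the `ι`-strict
unique Nash set of `π`. -/
theorem iotaUN_robust {A₁ A₂ : Type*} [Fintype A₁] [Fintype A₂]
    [DecidableEq A₁] [DecidableEq A₂] [Nonempty A₁] [Nonempty A₂]
    (π : A₁ × A₂) (ι δ : ℝ) (hι : 0 < ι) (hδ : 0 ≤ δ)
    (Rhat : A₁ × A₂ → ℝ)
    (hhat₂ : ∀ a₂, a₂ ≠ π.2 → Rhat (π.1, a₂) + (ι + 2 * δ) ≤ Rhat π)
    (hhat₁ : ∀ a₁, a₁ ≠ π.1 → Rhat π ≤ Rhat (a₁, π.2) - (ι + 2 * δ)) :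
    ∀ R : A₁ × A₂ → ℝ, (∀ a, |R a - Rhat a| ≤ δ) →
      (∀ a₂, a₂ ≠ π.2 → R (π.1, a₂) + ι ≤ R π) ∧
      (∀ a₁, a₁ ≠ π.1 → R π ≤ R (a₁, π.2) - ι) := by
  intro R hR
  constructor
  · intro a₂ h
    have h1 := abs_le.mp (hR (π.1, a₂))
    have h2 := abs_le.mp (hR π)
    have := hhat₂ a₂ h
    linarith [h1.1, h1.2, h2.1, h2.2]
  · intro a₁ h
    have h1 := abs_le.mp (hR (a₁, π.2))
    have h2 := abs_le.mp (hR π)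
    have := hhat₁ a₁ h
    linarith [h1.1, h1.2, h2.1, h2.2]
end
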